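/- Among all 7-element subsets of ZMod 12, the maximum possible number of alternate chords (3-element subsets with all pairwise differences in {3, 4, 5, 6, 7, 8, 9} ⊆ ZMod 12) is exactly 10. -/

import Mathlib

/-- The set of alternate harmonic intervals in ZMod 12 (including the tritone). -/
def altHarmonicSet : Finset (ZMod 12) := {3, 4, 5, 6, 7, 8, 9}

/-- The number of 3-element subsets of S that are alternate chords, i.e. whose
elements are pairwise at alternate harmonic intervals. -/
def altChordCount (S : Finset (ZMod 12)) : ℕ :=
  ((S.powersetCard 3).filter (fun c => ∀ x ∈ c, ∀ y ∈ c, x ≠ y → x - y ∈ altHarmonicSet)).card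

/-! The bound is a finite check. Reading each tone as its representative in `[0, 12)`, an
interval `x - y` is alternate iff `(x + 12 - y) % 12 ∈ [3, 9]`, so the alternate chords become
40 explicit 3-subsets of `range 12` and the chords of `S` are those contained in the image of `S`.
It remains to run through the 792 seven-element subsets of `range 12`; the maximum 10 is attained
by `{0, 1, 2, 4, 5, 8, 9}`. -/

open Finset

lemma Finset.filter_powersetCard_eq_filter_subset {α : Type*} [DecidableEq α] {T U : Finset α}
    (hTU : T ⊆ U) (k : ℕ) (p : Finset α → Prop) [DecidablePred p] :
    {c ∈ T.powersetCard k | p c} = {c ∈ {c ∈ U.powersetCard k | p c} | c ⊆ T} := by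
  ext c
  simp only [mem_filter, mem_powersetCard]
  constructor
  · rintro ⟨⟨hcT, hk⟩, hp⟩
    exact ⟨⟨⟨hcT.trans hTU, hk⟩, hp⟩, hcT⟩
  · rintro ⟨⟨⟨-, hk⟩, hp⟩, hcT⟩
    exact ⟨⟨hcT, hk⟩, hp⟩

def ZMod.valEmbedding (n : ℕ) [NeZero n] : ZMod n ↪ ℕ := ⟨ZMod.val, ZMod.val_injective n⟩

lemma ZMod.map_valEmbedding_subset_range {n : ℕ} [NeZero n] (S : Finset (ZMod n)) :
    S.map (ZMod.valEmbedding n) ⊆ range n := by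
  intro m hm
  obtain ⟨x, -, rfl⟩ := mem_map.1 hm
  exact mem_range.2 (ZMod.val_lt x)

lemma sub_mem_altHarmonicSet_iff (x y : ZMod 12) :
    x - y ∈ altHarmonicSet ↔ (x.val + 12 - y.val) % 12 ∈ Icc 3 9 := by
  revert x y
  decide

def natAltChords : Finset (Finset ℕ) :=
  {c ∈ (range 12).powersetCard 3 | ∀ x ∈ c, ∀ y ∈ c, x ≠ y → (x + 12 - y) % 12 ∈ Icc 3 9}

lemma altChordCount_eq_card_natAltChords (S : Finset (ZMod 12)) :
    altChordCount S = #{c ∈ natAltChords | c ⊆ S.map (ZMod.valEmbedding 12)} := by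
  rw [natAltChords, ← filter_powersetCard_eq_filter_subset (ZMod.map_valEmbedding_subset_range S),
    powersetCard_map, filter_map, card_map, altChordCount]
  congr 1
  refine filter_congr fun c _ => ?_
  simp [ZMod.valEmbedding, sub_mem_altHarmonicSet_iff, (ZMod.val_injective 12).ne_iff]

-- Stated over `Finset ℕ` because the kernel decides it there far faster than over `ZMod 12`.
set_option maxRecDepth 10000 in
lemma card_natAltChords_subset_le :
    ∀ T ∈ (range 12).powersetCard 7, #{c ∈ natAltChords | c ⊆ T} ≤ 10 := by
  decide +kernel

/-- Among all 7-element subsets of ZMod 12, the maximum possible number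
of alternate chords is exactly 10. -/
theorem stmt_18 :
    IsGreatest {n : ℕ | ∃ S : Finset (ZMod 12), S.card = 7 ∧ altChordCount S = n} 10 := by
  refine ⟨⟨{0, 1, 2, 4, 5, 8, 9}, by decide, by decide +kernel⟩, ?_⟩
  rintro n ⟨S, hS, rfl⟩
  rw [altChordCount_eq_card_natAltChords]
  refine card_natAltChords_subset_le _ (mem_powersetCard.2 ⟨?_, ?_⟩)
  · exact ZMod.map_valEmbedding_subset_range S
  · rwa [card_map]
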